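/- arXiv:1501.07431 — 2 statements merged into one kernel-verified Lean document; each statement's English description precedes it below -/
import Mathlib

section
/- Let R be a finite commutative local ring with maximal ideal M and residue map μ: R[x] → (R/M)[x]. A polynomial f(x) ∈ R[x] is regular (not a zero divisor) if and only if μ(f(x)) ≠ 0. -/
/-!
By McCoy's theorem a polynomial over a commutative ring is a zero divisor if and only if some
nonzero constant kills it. If `μ f ≠ 0`, some coefficient of `f` is a unit and then no nonzero
constant kills `f`. If `μ f = 0`, all coefficients lie in `M`; over an Artinian local ring `M` is
the only prime, hence an associated prime, so `M` is the annihilator of some `x ≠ 0`, and `x • f = 0`.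
-/

open Polynomial

theorem Polynomial.mem_nonZeroDivisors_of_isUnit_coeff {R : Type*} [CommRing R] {f : R[X]} {n : ℕ}
    (h : IsUnit (f.coeff n)) : f ∈ nonZeroDivisors R[X] := by
  refine Polynomial.mem_nonZeroDivisors_iff.2 fun a ha => ?_
  have han : a * f.coeff n = 0 := by simpa using congrArg (coeff · n) ha
  exact h.mul_left_eq_zero.1 han

theorem Polynomial.map_mk_eq_zero_iff {R : Type*} [CommRing R] {I : Ideal R} {f : R[X]} :
    f.map (Ideal.Quotient.mk I) = 0 ↔ ∀ n, f.coeff n ∈ I := by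
  simp [Polynomial.ext_iff, Ideal.Quotient.eq_zero_iff_mem]

theorem IsArtinianRing.maximalIdeal_mem_associatedPrimes (R : Type*) [CommRing R] [IsLocalRing R]
    [IsArtinianRing R] : IsLocalRing.maximalIdeal R ∈ associatedPrimes R R := by
  obtain ⟨P, hP⟩ := associatedPrimes.nonempty R R
  have : P.IsPrime := hP.isPrime
  rwa [← IsLocalRing.eq_maximalIdeal (IsArtinianRing.isMaximal_of_isPrime P)]

theorem IsArtinianRing.exists_ne_zero_mul_eq_zero_of_mem_maximalIdeal (R : Type*) [CommRing R]
    [IsLocalRing R] [IsArtinianRing R] :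
    ∃ x : R, x ≠ 0 ∧ ∀ m ∈ IsLocalRing.maximalIdeal R, m * x = 0 := by
  obtain ⟨hprime, x, hx⟩ :=
    isAssociatedPrime_iff.1 (IsArtinianRing.maximalIdeal_mem_associatedPrimes R)
  refine ⟨x, fun hx0 => hprime.ne_top ?_, fun m hm => ?_⟩
  · rw [hx, hx0, Submodule.colon_singleton_zero]
  · rwa [hx, Submodule.mem_colon_singleton, Submodule.mem_bot, smul_eq_mul] at hm

theorem stmt_5 (R : Type*) [CommRing R] [IsLocalRing R] [Finite R] (f : R[X]) :
    f ∈ nonZeroDivisors R[X] ↔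
      f.map (Ideal.Quotient.mk (IsLocalRing.maximalIdeal R)) ≠ 0 := by
  rw [Ne, Polynomial.map_mk_eq_zero_iff]
  constructor
  · intro hf hcoeff
    obtain ⟨x, hx0, hx⟩ := IsArtinianRing.exists_ne_zero_mul_eq_zero_of_mem_maximalIdeal R
    have hxf : x • f = 0 := by
      ext n
      simpa [mul_comm] using hx _ (hcoeff n)
    exact hx0 (Polynomial.mem_nonZeroDivisors_iff.1 hf x hxf)
  · rw [not_forall]
    rintro ⟨n, hn⟩
    exact mem_nonZeroDivisors_of_isUnit_coeff (IsLocalRing.notMem_maximalIdeal.1 hn)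
end

section
/- Let p be an odd prime and R = F_p[u,v]/⟨u², v², uv-vu⟩. Every ideal of R is one of: {0}, ⟨u⟩, ⟨v⟩, ⟨uv⟩, ⟨u + αv⟩ for some nonzero α ∈ F_p, ⟨u, v⟩, or R itself. -/
/-!
Every element of `R` is `a + b u + c v + d uv`, and it is a unit when `a ≠ 0` since
`b u + c v + d uv` is nilpotent; so a proper ideal lies in `⟨u, v⟩`. Multiplying
`b u + c v + d uv` by `v` and by `u` gives `b uv` and `c uv`, so an ideal not contained in
`F_p uv` contains `uv`, and is then determined by the subspace of pairs `(b, c)` with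
`b u + c v ∈ I`: the whole plane gives `⟨u, v⟩`, the line through `(b₀, c₀)` gives
`⟨b₀ u + c₀ v⟩`, which is `⟨u⟩`, `⟨v⟩` or `⟨u + α v⟩` after scaling.
-/

open MvPolynomial

/-- The ring `F_p[u,v]/⟨u², v², uv - vu⟩`. -/
abbrev Rpuv (p : ℕ) : Type :=
  MvPolynomial (Fin 2) (ZMod p) ⧸
    Ideal.span {(X 0 : MvPolynomial (Fin 2) (ZMod p)) ^ 2, X 1 ^ 2, X 0 * X 1 - X 1 * X 0}

section Submodule

variable {K M : Type*} [Field K] [AddCommGroup M] [Module K M] {N : Submodule K M} {u v : M}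
  {b₀ c₀ b c : K}

theorem smul_smul_add_smul_eq (b₀ c₀ b c : K) (u v : M) :
    b₀ • (b • u + c • v) = b • (b₀ • u + c₀ • v) + (b₀ * c - b * c₀) • v := by
  module

theorem Submodule.right_mem_of_smul_add_smul_mem (hw₀ : b₀ • u + c₀ • v ∈ N)
    (hw : b • u + c • v ∈ N) (hdet : b₀ * c - b * c₀ ≠ 0) : v ∈ N := by
  have h : (b₀ * c - b * c₀) • v ∈ N := by
    rw [eq_sub_of_add_eq' (smul_smul_add_smul_eq b₀ c₀ b c u v).symm]
    exact N.sub_mem (N.smul_mem b₀ hw) (N.smul_mem b hw₀)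
  simpa [hdet] using N.smul_mem (b₀ * c - b * c₀)⁻¹ h

theorem Submodule.smul_add_smul_mem_of_det_eq_zero (hw₀ : b₀ • u + c₀ • v ∈ N) (hb₀ : b₀ ≠ 0)
    (hdet : b₀ * c - b * c₀ = 0) : b • u + c • v ∈ N := by
  have h : b₀ • (b • u + c • v) ∈ N := by
    rw [smul_smul_add_smul_eq b₀ c₀, hdet, zero_smul, add_zero]
    exact N.smul_mem b hw₀
  simpa [hb₀] using N.smul_mem b₀⁻¹ h

end Submodule

section SquareZeroPair

variable {K R : Type*} [Field K] [CommRing R] [Algebra K R] {u v : R}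

theorem exists_eq_algebraMap_add_smul (hu : u ^ 2 = 0) (hv : v ^ 2 = 0)
    (hgen : Algebra.adjoin K {u, v} = ⊤) (x : R) :
    ∃ a b c d : K, x = algebraMap K R a + b • u + c • v + d • (u * v) := by
  have hx : x ∈ Algebra.adjoin K {u, v} := hgen ▸ Algebra.mem_top
  induction hx using Algebra.adjoin_induction with
  | mem x hx =>
    rcases hx with rfl | rfl
    · exact ⟨0, 1, 0, 0, by simp⟩
    · exact ⟨0, 0, 1, 0, by simp⟩
  | algebraMap a => exact ⟨a, 0, 0, 0, by simp⟩
  | add x y _ _ hx hy =>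
    obtain ⟨a, b, c, d, rfl⟩ := hx
    obtain ⟨a', b', c', d', rfl⟩ := hy
    exact ⟨a + a', b + b', c + c', d + d', by simp only [map_add, add_smul]; abel⟩
  | mul x y _ _ hx hy =>
    obtain ⟨a, b, c, d, rfl⟩ := hx
    obtain ⟨a', b', c', d', rfl⟩ := hy
    refine ⟨a * a', a * b' + b * a', a * c' + c * a', a * d' + d * a' + b * c' + c * b', ?_⟩
    simp only [Algebra.smul_def, map_add, map_mul]
    linear_combination
      (algebraMap K R b * algebraMap K R b' + (algebraMap K R b * algebraMap K R d'
        + algebraMap K R d * algebraMap K R b') * v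
        + algebraMap K R d * algebraMap K R d' * v ^ 2) * hu
      + (algebraMap K R c * algebraMap K R c' + (algebraMap K R c * algebraMap K R d'
        + algebraMap K R d * algebraMap K R c') * u) * hv

theorem isUnit_algebraMap_add_smul (hu : u ^ 2 = 0) (hv : v ^ 2 = 0) {a : K} (ha : a ≠ 0)
    (b c d : K) : IsUnit (algebraMap K R a + b • u + c • v + d • (u * v)) := by
  have hnil : IsNilpotent (b • u + c • v + d • (u * v)) := by
    have hu' : IsNilpotent u := ⟨2, hu⟩
    have hv' : IsNilpotent v := ⟨2, hv⟩
    refine (Commute.all _ _).isNilpotent_add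
      ((Commute.all _ _).isNilpotent_add (hu'.smul b) (hv'.smul c)) ?_
    exact ((Commute.all _ _).isNilpotent_mul_left hv').smul d
  rw [add_assoc, add_assoc, ← add_assoc (b • u)]
  exact hnil.isUnit_add_left_of_commute ((isUnit_iff_ne_zero.mpr ha).map _) (Commute.all _ _)

theorem exists_eq_smul_of_mem_of_ne_top (hu : u ^ 2 = 0) (hv : v ^ 2 = 0)
    (hgen : Algebra.adjoin K {u, v} = ⊤) {I : Ideal R} (hI : I ≠ ⊤) {x : R} (hx : x ∈ I) :
    ∃ b c d : K, x = b • u + c • v + d • (u * v) := by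
  obtain ⟨a, b, c, d, rfl⟩ := exists_eq_algebraMap_add_smul hu hv hgen x
  obtain rfl : a = 0 := by
    by_contra ha
    exact hI (I.eq_top_of_isUnit_mem hx (isUnit_algebraMap_add_smul hu hv ha b c d))
  exact ⟨b, c, d, by simp⟩

theorem smul_add_smul_add_smul_mul_mul_right (hv : v ^ 2 = 0) (b c d : K) :
    (b • u + c • v + d • (u * v)) * v = b • (u * v) := by
  simp only [Algebra.smul_def]
  linear_combination (algebraMap K R c + algebraMap K R d * u) * hv

theorem smul_add_smul_add_smul_mul_mul_left (hu : u ^ 2 = 0) (b c d : K) :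
    (b • u + c • v + d • (u * v)) * u = c • (u * v) := by
  simp only [Algebra.smul_def]
  linear_combination (algebraMap K R b + algebraMap K R d * v) * hu

theorem mul_mem_of_smul_add_smul_add_smul_mem (hu : u ^ 2 = 0) (hv : v ^ 2 = 0) {I : Ideal R}
    {b c d : K} (hbc : b ≠ 0 ∨ c ≠ 0) (hx : b • u + c • v + d • (u * v) ∈ I) : u * v ∈ I := by
  rcases hbc with hb | hc
  · have h := I.smul_of_tower_mem b⁻¹ (I.mul_mem_right v hx)
    rwa [smul_add_smul_add_smul_mul_mul_right hv, inv_smul_smul₀ hb] at h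
  · have h := I.smul_of_tower_mem c⁻¹ (I.mul_mem_right u hx)
    rwa [smul_add_smul_add_smul_mul_mul_left hu, inv_smul_smul₀ hc] at h

theorem Ideal.eq_bot_or_eq_span_singleton_of_forall_eq_smul {I : Ideal R} {w : R}
    (h : ∀ x ∈ I, ∃ d : K, x = d • w) : I = ⊥ ∨ I = Ideal.span {w} := by
  by_cases hI : I = ⊥
  · exact Or.inl hI
  obtain ⟨x, hxI, hx0⟩ := Submodule.exists_mem_ne_zero_of_ne_bot hI
  obtain ⟨d, rfl⟩ := h x hxI
  have hd : d ≠ 0 := by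
    rintro rfl
    exact hx0 (zero_smul K w)
  refine Or.inr (le_antisymm (fun x hx => ?_) ?_)
  · obtain ⟨e, rfl⟩ := h x hx
    exact Submodule.smul_of_tower_mem _ e (Ideal.mem_span_singleton_self w)
  · rw [Ideal.span_singleton_le_iff_mem]
    simpa [hd] using I.smul_of_tower_mem d⁻¹ hxI

theorem Ideal.span_smul_add_smul_eq {b c : K} (hbc : b ≠ 0 ∨ c ≠ 0) :
    Ideal.span {b • u + c • v} = Ideal.span {u} ∨ Ideal.span {b • u + c • v} = Ideal.span {v} ∨
      ∃ α : K, α ≠ 0 ∧ Ideal.span {b • u + c • v} = Ideal.span {u + α • v} := by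
  by_cases hb : b = 0
  · have hc := hbc.resolve_left (not_not.mpr hb)
    rw [hb, zero_smul, zero_add, Algebra.smul_def,
      Ideal.span_singleton_mul_left_unit ((isUnit_iff_ne_zero.mpr hc).map _)]
    exact Or.inr (Or.inl rfl)
  have hw : b • u + c • v = algebraMap K R b * (u + (c / b) • v) := by
    rw [← Algebra.smul_def, smul_add, smul_smul, mul_div_cancel₀ _ hb]
  rw [hw, Ideal.span_singleton_mul_left_unit ((isUnit_iff_ne_zero.mpr hb).map _)]
  by_cases hc : c = 0
  · exact Or.inl (by simp [hc])
  · exact Or.inr (Or.inr ⟨c / b, div_ne_zero hc hb, rfl⟩)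

theorem Ideal.eq_span_pair_of_mem_of_mem (hu : u ^ 2 = 0) (hv : v ^ 2 = 0)
    (hgen : Algebra.adjoin K {u, v} = ⊤) {I : Ideal R} (hI : I ≠ ⊤) (huI : u ∈ I) (hvI : v ∈ I) :
    I = Ideal.span {u, v} := by
  refine le_antisymm (fun x hx => ?_) (Ideal.span_le.mpr (Set.insert_subset huI
    (Set.singleton_subset_iff.mpr hvI)))
  obtain ⟨b, c, d, rfl⟩ := exists_eq_smul_of_mem_of_ne_top hu hv hgen hI hx
  have hu' : u ∈ Ideal.span {u, v} := Ideal.subset_span (Set.mem_insert u {v})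
  have hv' : v ∈ Ideal.span {u, v} := Ideal.subset_span (Set.mem_insert_of_mem u rfl)
  exact add_mem (add_mem (Submodule.smul_of_tower_mem _ b hu')
      (Submodule.smul_of_tower_mem _ c hv'))
    (Submodule.smul_of_tower_mem _ d (Ideal.mul_mem_right v _ hu'))

theorem Ideal.mem_and_mem_or_eq_span_singleton (hu : u ^ 2 = 0) (hv : v ^ 2 = 0)
    (hgen : Algebra.adjoin K {u, v} = ⊤) {I : Ideal R} (hI : I ≠ ⊤) (huvI : u * v ∈ I)
    {b₀ c₀ : K} (hbc₀ : b₀ ≠ 0 ∨ c₀ ≠ 0) (hw₀ : b₀ • u + c₀ • v ∈ I) :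
    (u ∈ I ∧ v ∈ I) ∨ I = Ideal.span {b₀ • u + c₀ • v} := by
  by_cases huv : u ∈ I ∧ v ∈ I
  · exact Or.inl huv
  refine Or.inr (le_antisymm (fun x hx => ?_) ((Ideal.span_singleton_le_iff_mem I).mpr hw₀))
  obtain ⟨b, c, d, rfl⟩ := exists_eq_smul_of_mem_of_ne_top hu hv hgen hI hx
  have hw : b • u + c • v ∈ I := by
    simpa using I.sub_mem hx (I.smul_of_tower_mem d huvI)
  have hdet : b₀ * c - b * c₀ = 0 := by
    by_contra hdet
    refine huv ⟨?_,
      Submodule.right_mem_of_smul_add_smul_mem (N := I.restrictScalars K) hw₀ hw hdet⟩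
    rw [add_comm] at hw₀ hw
    exact Submodule.right_mem_of_smul_add_smul_mem (N := I.restrictScalars K) hw₀ hw
      (by contrapose! hdet; linear_combination -hdet)
  set J := Ideal.span {b₀ • u + c₀ • v}
  have hw₀J : b₀ • u + c₀ • v ∈ J := Ideal.mem_span_singleton_self _
  have hwJ : b • u + c • v ∈ J := by
    rcases hbc₀ with hb₀ | hc₀
    · exact Submodule.smul_add_smul_mem_of_det_eq_zero (N := J.restrictScalars K) hw₀J hb₀ hdet
    · rw [add_comm] at hw₀J ⊢
      exact Submodule.smul_add_smul_mem_of_det_eq_zero (N := J.restrictScalars K) hw₀J hc₀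
        (by linear_combination -hdet)
  have huvJ : u * v ∈ J :=
    mul_mem_of_smul_add_smul_add_smul_mem (d := 0) hu hv hbc₀ (by simpa using hw₀J)
  exact add_mem hwJ (J.smul_of_tower_mem d huvJ)

theorem Ideal.eq_bot_or_eq_span_or_eq_top_of_sq_eq_zero (hu : u ^ 2 = 0) (hv : v ^ 2 = 0)
    (hgen : Algebra.adjoin K {u, v} = ⊤) (I : Ideal R) :
    I = ⊥ ∨ I = Ideal.span {u} ∨ I = Ideal.span {v} ∨ I = Ideal.span {u * v} ∨
      (∃ α : K, α ≠ 0 ∧ I = Ideal.span {u + α • v}) ∨ I = Ideal.span {u, v} ∨ I = ⊤ := by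
  by_cases hI : I = ⊤
  · simp [hI]
  by_cases hcentre : ∀ x ∈ I, ∃ d : K, x = d • (u * v)
  · rcases Ideal.eq_bot_or_eq_span_singleton_of_forall_eq_smul hcentre with h | h <;> simp [h]
  push Not at hcentre
  obtain ⟨x₀, hx₀, hx₀_ne⟩ := hcentre
  obtain ⟨b₀, c₀, d₀, rfl⟩ := exists_eq_smul_of_mem_of_ne_top hu hv hgen hI hx₀
  have hbc₀ : b₀ ≠ 0 ∨ c₀ ≠ 0 := by
    by_contra! h
    exact hx₀_ne d₀ (by simp [h.1, h.2])
  have huvI := mul_mem_of_smul_add_smul_add_smul_mem hu hv hbc₀ hx₀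
  have hw₀ : b₀ • u + c₀ • v ∈ I := by
    simpa using I.sub_mem hx₀ (I.smul_of_tower_mem d₀ huvI)
  rcases Ideal.mem_and_mem_or_eq_span_singleton hu hv hgen hI huvI hbc₀ hw₀ with ⟨huI, hvI⟩ | rfl
  · simp [Ideal.eq_span_pair_of_mem_of_mem hu hv hgen hI huI hvI]
  · rcases Ideal.span_smul_add_smul_eq (u := u) (v := v) hbc₀ with h | h | h <;> simp [h]

end SquareZeroPair

theorem Rpuv.mk_X_sq (p : ℕ) (i : Fin 2) : (Ideal.Quotient.mk _ (X i) : Rpuv p) ^ 2 = 0 := by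
  rw [← map_pow, Ideal.Quotient.eq_zero_iff_mem]
  fin_cases i <;> exact Ideal.subset_span (by simp)

theorem Rpuv.adjoin_mk_X_eq_top (p : ℕ) :
    Algebra.adjoin (ZMod p) {(Ideal.Quotient.mk _ (X 0) : Rpuv p), Ideal.Quotient.mk _ (X 1)} =
      ⊤ := by
  rw [eq_top_iff]
  rintro x -
  obtain ⟨f, rfl⟩ := Ideal.Quotient.mk_surjective x
  induction f using MvPolynomial.induction_on with
  | C a =>
    rw [← MvPolynomial.algebraMap_eq, Ideal.Quotient.mk_algebraMap]
    exact Subalgebra.algebraMap_mem _ a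
  | add f g hf hg =>
    rw [map_add]
    exact add_mem hf hg
  | mul_X f i hf =>
    rw [map_mul]
    refine mul_mem hf (Algebra.subset_adjoin ?_)
    fin_cases i <;> simp

theorem stmt_8_general (p : ℕ) (hp : p.Prime)
    (u v : Rpuv p)
    (hu : u = Ideal.Quotient.mk _ (X 0)) (hv : v = Ideal.Quotient.mk _ (X 1))
    (I : Ideal (Rpuv p)) :
    I = ⊥ ∨ I = Ideal.span {u} ∨ I = Ideal.span {v} ∨ I = Ideal.span {u * v} ∨
      (∃ α : ZMod p, α ≠ 0 ∧ I = Ideal.span {u + algebraMap (ZMod p) (Rpuv p) α * v}) ∨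
      I = Ideal.span {u, v} ∨ I = ⊤ := by
  have : Fact p.Prime := ⟨hp⟩
  subst hu hv
  simpa only [Algebra.smul_def] using Ideal.eq_bot_or_eq_span_or_eq_top_of_sq_eq_zero (K := ZMod p)
    (Rpuv.mk_X_sq p 0) (Rpuv.mk_X_sq p 1) (Rpuv.adjoin_mk_X_eq_top p) I

theorem stmt_8 (p : ℕ) (hp : p.Prime) (hodd : Odd p)
    (u v : Rpuv p)
    (hu : u = Ideal.Quotient.mk _ (X 0)) (hv : v = Ideal.Quotient.mk _ (X 1))
    (I : Ideal (Rpuv p)) :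
    I = ⊥ ∨ I = Ideal.span {u} ∨ I = Ideal.span {v} ∨ I = Ideal.span {u * v} ∨
      (∃ α : ZMod p, α ≠ 0 ∧ I = Ideal.span {u + algebraMap (ZMod p) (Rpuv p) α * v}) ∨
      I = Ideal.span {u, v} ∨ I = ⊤ :=
  stmt_8_general p hp u v hu hv I
end
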